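/- Let φ : ℝ² → [0,∞) be continuous, compactly supported, with ∫_{ℝ²} φ(x) dx = 1, and define R(x) := ∫_{ℝ²} φ(x+y)φ(y) dy. Define recursively h₀(t) := 1 and h_n(t) := ∫₀ᵗ h_{n−1}(s) ∫_{ℝ²} G_{t−s}(z) R(z) dz ds for n ≥ 1. Let 0 < κ < π and T > 0. Then there exist ε₀ ∈ (0,1) (depending on κ, T and φ) and a constant C > 0 depending only on κ such that for all ε ∈ (0, ε₀) and all θ ∈ [0, T/ε²], the series ∑_{n=0}^{∞} (κ/log(ε⁻¹))ⁿ h_n(θ) converges and ∑_{n=0}^{∞} (κ/log(ε⁻¹))ⁿ h_n(θ) ≤ C. -/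

import Mathlib

open MeasureTheory Real Set

/-- The two-dimensional heat kernel `G_t(x) = (1/(2πt)) exp(−|x|²/(2t))`. -/
noncomputable def G (t : ℝ) (x : EuclideanSpace ℝ (Fin 2)) : ℝ :=
  (2 * Real.pi * t)⁻¹ * Real.exp (-‖x‖ ^ 2 / (2 * t))

local notation "E2" => EuclideanSpace ℝ (Fin 2)

lemma gauss_integrable {u : ℝ} (hu : 0 < u) : Integrable (G u) := by
  have hb : (0:ℝ) < (2*u)⁻¹ := by positivity
  have h : Integrable (fun z : E2 => Real.exp (-(2*u)⁻¹ * ‖z‖^2)) := by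
    have := (GaussianFourier.integrable_cexp_neg_mul_sq_norm_add (V := E2)
      (b := ((2*u)⁻¹ : ℂ)) (by simpa using hb) 0 0).norm
    simpa [Complex.norm_exp, ← Complex.ofReal_pow] using this
  have : Integrable (fun z : E2 =>
      (2 * Real.pi * u)⁻¹ * Real.exp (-(2*u)⁻¹ * ‖z‖^2)) := h.const_mul _
  refine this.congr ?_
  filter_upwards with z
  unfold G
  ring_nf

lemma gauss_integral {u : ℝ} (hu : 0 < u) : (∫ z, G u z) = 1 := by
  have hb : (0:ℝ) < (2*u)⁻¹ := by positivity
  have key := GaussianFourier.integral_rexp_neg_mul_sq_norm (V := E2) hb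
  have hrk : (Module.finrank ℝ E2 : ℝ) = 2 := by
    simp [finrank_euclideanSpace_fin]
  rw [hrk] at key
  have heq : ∀ z : E2,
      G u z = (2 * Real.pi * u)⁻¹ * Real.exp (-(2*u)⁻¹ * ‖z‖^2) := by
    intro z; unfold G; ring_nf
  simp_rw [heq]
  rw [integral_const_mul, key]
  rw [show ((2:ℝ)/2 : ℝ) = 1 by norm_num]
  rw [Real.rpow_one]
  field_simp

/-- Pointwise bounds on the heat kernel. -/
lemma gauss_nonneg {u : ℝ} (hu : 0 ≤ u) (z : E2) : 0 ≤ G u z := by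
  unfold G
  have : (0:ℝ) ≤ (2 * Real.pi * u)⁻¹ := by positivity
  exact mul_nonneg this (Real.exp_nonneg _)

lemma gauss_le {u : ℝ} (hu : 0 < u) (z : E2) : G u z ≤ (2 * Real.pi * u)⁻¹ := by
  unfold G
  have h1 : Real.exp (-‖z‖ ^ 2 / (2 * u)) ≤ 1 := by
    rw [Real.exp_le_one_iff]
    have h2 : (0:ℝ) ≤ ‖z‖^2 := by positivity
    have h3 : (0:ℝ) < 2*u := by positivity
    exact div_nonpos_iff.2 (Or.inr ⟨by linarith, le_of_lt h3⟩)
  calc (2 * Real.pi * u)⁻¹ * Real.exp (-‖z‖ ^ 2 / (2 * u))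
      ≤ (2 * Real.pi * u)⁻¹ * 1 := by
        apply mul_le_mul_of_nonneg_left h1 (by positivity)
    _ = (2 * Real.pi * u)⁻¹ := mul_one _



lemma Phi_cont {φ : E2 → ℝ} (hc : Continuous φ) :
    Continuous (fun p : E2 × E2 => φ (p.1 + p.2) * φ p.2) :=
  (hc.comp (continuous_fst.add continuous_snd)).mul (hc.comp continuous_snd)

lemma Phi_hcs {φ : E2 → ℝ} (hsupp : HasCompactSupport φ) :
    HasCompactSupport (fun p : E2 × E2 => φ (p.1 + p.2) * φ p.2) := by
  have hK : IsCompact (tsupport φ) := hsupp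
  have hS : IsCompact ((fun q : E2 × E2 => (q.1 - q.2, q.2)) '' (tsupport φ ×ˢ tsupport φ)) :=
    (hK.prod hK).image (by fun_prop)
  apply HasCompactSupport.intro hS
  intro p hp
  by_contra hne
  have h1 : φ (p.1 + p.2) ≠ 0 := fun h => hne (by simp [h])
  have h2 : φ p.2 ≠ 0 := fun h => hne (by simp [h])
  apply hp
  refine ⟨(p.1 + p.2, p.2), ⟨subset_tsupport φ h1, subset_tsupport φ h2⟩, ?_⟩
  simp

lemma Phi_integrable {φ : E2 → ℝ} (hc : Continuous φ) (hsupp : HasCompactSupport φ) :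
    Integrable (fun p : E2 × E2 => φ (p.1 + p.2) * φ p.2) :=
  (Phi_cont hc).integrable_of_hasCompactSupport (Phi_hcs hsupp)

lemma R_nonneg {φ : E2 → ℝ} (hpos : ∀ x, 0 ≤ φ x) (z : E2) : 0 ≤ ∫ y, φ (z + y) * φ y :=
  integral_nonneg fun y => mul_nonneg (hpos _) (hpos _)

lemma R_integrable {φ : E2 → ℝ} (hc : Continuous φ) (hsupp : HasCompactSupport φ) :
    Integrable (fun z : E2 => ∫ y, φ (z + y) * φ y) := by
  have h := Phi_integrable hc hsupp
  rw [Measure.volume_eq_prod] at h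
  exact h.integral_prod_left

lemma R_total {φ : E2 → ℝ} (hc : Continuous φ) (hsupp : HasCompactSupport φ)
    (hint : (∫ x, φ x) = 1) : (∫ z : E2, ∫ y, φ (z + y) * φ y) = 1 := by
  have hΦ : Integrable (fun p : E2 × E2 => φ (p.1 + p.2) * φ p.2)
      ((volume : Measure E2).prod volume) := by
    have := Phi_integrable hc hsupp; rwa [Measure.volume_eq_prod] at this
  have swap := integral_integral_swap (f := fun z y : E2 => φ (z + y) * φ y) hΦ
  rw [swap]
  have h1 : ∀ y : E2, (∫ z, φ (z + y) * φ y) = φ y := by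
    intro y
    rw [integral_mul_const, integral_add_right_eq_self φ y, hint, one_mul]
  simp_rw [h1, hint]


lemma itil_II {M a b : ℝ} (hM : 0 < M) (ha : 0 ≤ a) (hab : a ≤ b) :
    IntervalIntegrable (fun u => min M (2*Real.pi*u)⁻¹) volume a b := by
  rw [intervalIntegrable_iff]
  apply Integrable.mono' (g := fun _ => M)
  · rw [Set.uIoc]
    exact integrableOn_const measure_Ioc_lt_top.ne
  · exact (measurable_const.min ((measurable_id'.const_mul (2*Real.pi)).inv)).aestronglyMeasurable.restrict
  · refine (ae_restrict_iff' measurableSet_uIoc).2 (Filter.Eventually.of_forall fun u hu => ?_)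
    rw [Set.uIoc_of_le hab] at hu
    have hu0 : 0 < u := lt_of_le_of_lt ha hu.1
    rw [Real.norm_eq_abs, abs_of_nonneg (le_min hM.le (by positivity))]
    exact min_le_left _ _

lemma itil_integral_le {M θ t : ℝ} (hM : 0 < M) (ht : 0 ≤ t) (htθ : t ≤ θ) :
    (∫ s in (0:ℝ)..t, min M (2*Real.pi*(t - s))⁻¹)
      ≤ (2*Real.pi)⁻¹ * (1 + max 0 (Real.log (2*Real.pi*M*θ))) := by
  rw [intervalIntegral.integral_comp_sub_left (fun u => min M (2*Real.pi*u)⁻¹) t]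
  simp only [sub_self, sub_zero]
  have hBnn : (0:ℝ) ≤ max 0 (Real.log (2*Real.pi*M*θ)) := le_max_left _ _
  set u0 := (2*Real.pi*M)⁻¹ with hu0def
  have hu0 : 0 < u0 := by positivity
  have hMu0 : u0 * M = (2*Real.pi)⁻¹ := by
    rw [hu0def]; field_simp
  by_cases hcase : t ≤ u0
  · have h1 : (∫ u in (0:ℝ)..t, min M (2*Real.pi*u)⁻¹) ≤ ∫ u in (0:ℝ)..t, M :=
      intervalIntegral.integral_mono_on ht (itil_II hM le_rfl (by assumption)) intervalIntegrable_const
        (fun u _ => min_le_left _ _)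
    rw [intervalIntegral.integral_const, smul_eq_mul, sub_zero] at h1
    have h2 : t * M ≤ u0 * M := mul_le_mul_of_nonneg_right hcase hM.le
    calc (∫ u in (0:ℝ)..t, min M (2*Real.pi*u)⁻¹) ≤ t * M := h1
      _ ≤ (2*Real.pi)⁻¹ := by rw [← hMu0]; exact h2
      _ ≤ _ := by nlinarith [Real.pi_pos, inv_pos.2 (by positivity : (0:ℝ) < 2*Real.pi)]
  · push_neg at hcase
    have hII1 : IntervalIntegrable (fun u => min M (2*Real.pi*u)⁻¹) volume 0 u0 := itil_II hM le_rfl hu0.le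
    have hII2 : IntervalIntegrable (fun u => min M (2*Real.pi*u)⁻¹) volume u0 t := itil_II hM hu0.le hcase.le
    rw [← intervalIntegral.integral_add_adjacent_intervals hII1 hII2]
    have hb1 : (∫ u in (0:ℝ)..u0, min M (2*Real.pi*u)⁻¹) ≤ (2*Real.pi)⁻¹ := by
      have h1 : (∫ u in (0:ℝ)..u0, min M (2*Real.pi*u)⁻¹) ≤ ∫ u in (0:ℝ)..u0, M :=
        intervalIntegral.integral_mono_on hu0.le hII1 intervalIntegrable_const
          (fun u _ => min_le_left _ _)
      rw [intervalIntegral.integral_const, smul_eq_mul, sub_zero] at h1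
      rw [← hMu0]; exact h1
    have hinvII : IntervalIntegrable (fun u => (2*Real.pi*u)⁻¹) volume u0 t := by
      apply ContinuousOn.intervalIntegrable
      apply ContinuousOn.inv₀ (by fun_prop)
      intro x hx
      rw [Set.uIcc_of_le hcase.le] at hx
      have : 0 < x := lt_of_lt_of_le hu0 hx.1
      positivity
    have hb2 : (∫ u in u0..t, min M (2*Real.pi*u)⁻¹) ≤ (2*Real.pi)⁻¹ * max 0 (Real.log (2*Real.pi*M*θ)) := by
      have h1 : (∫ u in u0..t, min M (2*Real.pi*u)⁻¹) ≤ ∫ u in u0..t, (2*Real.pi*u)⁻¹ :=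
        intervalIntegral.integral_mono_on hcase.le hII2 hinvII (fun u _ => min_le_right _ _)
      have h2 : (∫ u in u0..t, (2*Real.pi*u)⁻¹) = (2*Real.pi)⁻¹ * Real.log (t / u0) := by
        simp_rw [mul_inv]
        rw [intervalIntegral.integral_const_mul, integral_inv_of_pos hu0 (hu0.trans hcase)]
      have h3 : Real.log (t / u0) ≤ max 0 (Real.log (2*Real.pi*M*θ)) := by
        have htu : t / u0 = 2*Real.pi*M*t := by rw [hu0def]; field_simp
        rw [htu]
        have ht0 : 0 < t := hu0.trans hcase
        refine le_trans (Real.log_le_log (by positivity) ?_) (le_max_right _ _)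
        have : 0 < 2*Real.pi*M := by positivity
        nlinarith
      calc (∫ u in u0..t, min M (2*Real.pi*u)⁻¹) ≤ (2*Real.pi)⁻¹ * Real.log (t / u0) := h2 ▸ h1
        _ ≤ _ := mul_le_mul_of_nonneg_left h3 (by positivity)
    calc _ ≤ (2*Real.pi)⁻¹ + (2*Real.pi)⁻¹ * max 0 (Real.log (2*Real.pi*M*θ)) := add_le_add hb1 hb2
      _ = _ := by ring

/-- With `φ`, `R x = ∫ φ(x+y)φ(y) dy`, and the iterated kernels
`h₀(t) = 1`, `h_n(t) = ∫₀ᵗ h_{n−1}(s) ∫ G_{t−s}(z) R(z) dz ds`: for `0 < κ < π` and `T > 0`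
there exist `ε₀ ∈ (0,1)` (depending on `κ, T, φ`) and `C > 0` depending only on `κ` such that
for all `ε ∈ (0, ε₀)` and all `θ ∈ [0, T/ε²]`, the series `∑ₙ (κ/log ε⁻¹)ⁿ h_n(θ)` converges
and is bounded by `C`. -/
theorem stmt8 (κ : ℝ) (hκ0 : 0 < κ) (hκ : κ < Real.pi) :
    ∃ C > (0:ℝ),
      ∀ φ : EuclideanSpace ℝ (Fin 2) → ℝ,
        Continuous φ → HasCompactSupport φ → (∀ x, 0 ≤ φ x) → (∫ x, φ x) = 1 →
      ∀ h : ℕ → ℝ → ℝ, (∀ t, h 0 t = 1) →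
        (∀ n : ℕ, ∀ t : ℝ,
          h (n + 1) t = ∫ s in (0:ℝ)..t, h n s * ∫ z, G (t - s) z * (∫ y, φ (z + y) * φ y)) →
      ∀ T : ℝ, 0 < T →
        ∃ ε₀ ∈ Set.Ioo (0:ℝ) 1, ∀ ε ∈ Set.Ioo (0:ℝ) ε₀,
          ∀ θ ∈ Set.Icc (0:ℝ) (T / ε ^ 2),
            Summable (fun n : ℕ => (κ / Real.log ε⁻¹) ^ n * h n θ) ∧
            (∑' n : ℕ, (κ / Real.log ε⁻¹) ^ n * h n θ) ≤ C := by
  have hπ := Real.pi_pos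
  set q : ℝ := (κ / Real.pi + 1) / 2 with hqdef
  have hκπ : κ / Real.pi < 1 := (div_lt_one hπ).2 hκ
  have hκπ0 : 0 < κ / Real.pi := by positivity
  have hq0 : 0 < q := by rw [hqdef]; linarith
  have hq1 : q < 1 := by rw [hqdef]; linarith
  refine ⟨(1 - q)⁻¹, inv_pos.2 (by linarith), ?_⟩
  intro φ hc hsupp hpos hint h h0 hrec T hT
  obtain ⟨Cφ, hCφ⟩ := hsupp.exists_bound_of_continuous hc
  set M : ℝ := Cφ + 1 with hMdef
  have hM0 : 0 < M := by
    have := (norm_nonneg (φ 0)).trans (hCφ 0)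
    rw [hMdef]; linarith
  have hφint : Integrable φ := hc.integrable_of_hasCompactSupport hsupp
  have hRle : ∀ z : EuclideanSpace ℝ (Fin 2), (∫ y, φ (z + y) * φ y) ≤ M := by
    intro z
    have hle : (∫ y, φ (z + y) * φ y) ≤ ∫ y, M * φ y := by
      apply integral_mono_of_nonneg
      · exact Filter.Eventually.of_forall fun y => mul_nonneg (hpos _) (hpos _)
      · exact hφint.const_mul M
      · refine Filter.Eventually.of_forall fun y => ?_
        have h1 : φ (z + y) ≤ M := by
          have := (le_abs_self (φ (z+y))).trans ((Real.norm_eq_abs _ ▸ hCφ (z+y)) : |φ (z+y)| ≤ Cφ)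
          rw [hMdef]; linarith
        exact mul_le_mul_of_nonneg_right h1 (hpos y)
    rwa [integral_const_mul, hint, mul_one] at hle
  -- the inner-kernel bounds
  have hI_nonneg : ∀ u : ℝ, 0 ≤ u →
      0 ≤ ∫ z, G u z * (∫ y, φ (z + y) * φ y) := by
    intro u hu
    exact integral_nonneg fun z => mul_nonneg (gauss_nonneg hu z) (R_nonneg hpos z)
  have hI_min : ∀ u : ℝ, 0 ≤ u →
      (∫ z, G u z * (∫ y, φ (z + y) * φ y)) ≤ min M (2 * Real.pi * u)⁻¹ := by
    intro u hu
    rcases eq_or_lt_of_le hu with hu0 | hu0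
    · have hG0 : ∀ z : EuclideanSpace ℝ (Fin 2), G u z = 0 := by
        intro z; unfold G; rw [← hu0]; simp
      simp only [hG0, zero_mul, integral_zero]
      rw [← hu0]
      simp [hM0.le]
    · refine le_min ?_ ?_
      · have hle : (∫ z, G u z * (∫ y, φ (z + y) * φ y)) ≤ ∫ z, M * G u z := by
          apply integral_mono_of_nonneg
          · exact Filter.Eventually.of_forall fun z =>
              mul_nonneg (gauss_nonneg hu z) (R_nonneg hpos z)
          · exact (gauss_integrable hu0).const_mul M
          · refine Filter.Eventually.of_forall fun z => ?_
            show G u z * (∫ y, φ (z + y) * φ y) ≤ M * G u z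
            rw [mul_comm M (G u z)]
            exact mul_le_mul_of_nonneg_left (hRle z) (gauss_nonneg hu z)
        rwa [integral_const_mul, gauss_integral hu0, mul_one] at hle
      · have hle : (∫ z, G u z * (∫ y, φ (z + y) * φ y))
            ≤ ∫ z, (2 * Real.pi * u)⁻¹ * (∫ y, φ (z + y) * φ y) := by
          apply integral_mono_of_nonneg
          · exact Filter.Eventually.of_forall fun z =>
              mul_nonneg (gauss_nonneg hu z) (R_nonneg hpos z)
          · exact (R_integrable hc hsupp).const_mul _
          · refine Filter.Eventually.of_forall fun z => ?_
            show G u z * (∫ y, φ (z + y) * φ y) ≤ (2 * Real.pi * u)⁻¹ * (∫ y, φ (z + y) * φ y)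
            exact mul_le_mul_of_nonneg_right (gauss_le hu0 z) (R_nonneg hpos z)
        rwa [integral_const_mul, R_total hc hsupp hint, mul_one] at hle
  -- choice of ε₀
  set A0 : ℝ := max 0 (Real.log (2 * Real.pi * M * T)) with hA0def
  have hA0 : 0 ≤ A0 := le_max_left _ _
  set N : ℝ := κ * (1 + A0) / (Real.pi - κ) with hNdef
  have hπκ : 0 < Real.pi - κ := by linarith
  have hN0 : 0 < N := by rw [hNdef]; exact div_pos (by positivity) hπκ
  refine ⟨min (1/2) (Real.exp (-N)), ⟨by positivity, lt_of_le_of_lt (min_le_left _ _) (by norm_num)⟩, ?_⟩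
  intro ε hε θ hθ
  obtain ⟨hε0, hεlt⟩ := hε
  have hεN : ε < Real.exp (-N) := lt_of_lt_of_le hεlt (min_le_right _ _)
  set L : ℝ := Real.log ε⁻¹ with hLdef
  have hLN : N < L := by
    have := Real.log_lt_log hε0 hεN
    rw [Real.log_exp] at this
    rw [hLdef, Real.log_inv]
    linarith
  have hL0 : 0 < L := hN0.trans hLN
  set B : ℝ := (2 * Real.pi)⁻¹ * (1 + max 0 (Real.log (2 * Real.pi * M * θ))) with hBdef
  have hB0 : 0 < B := by
    have : (0:ℝ) ≤ max 0 (Real.log (2 * Real.pi * M * θ)) := le_max_left _ _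
    rw [hBdef]; positivity
  have hθ0 : 0 ≤ θ := hθ.1
  -- the key bound : κ/L * B ≤ q
  have hqB : κ / L * B ≤ q := by
    have hmaxle : max 0 (Real.log (2 * Real.pi * M * θ)) ≤ A0 + 2 * L := by
      have hXpos : 0 < 2 * Real.pi * M * (T / ε ^ 2) := by positivity
      have hlogX : Real.log (2 * Real.pi * M * (T / ε ^ 2)) = Real.log (2 * Real.pi * M * T) + 2 * L := by
        have hε2 : (ε ^ 2 : ℝ) ≠ 0 := by positivity
        rw [show 2 * Real.pi * M * (T / ε ^ 2) = (2 * Real.pi * M * T) * (ε ^ 2)⁻¹ by ring]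
        rw [Real.log_mul (by positivity) (inv_ne_zero hε2), Real.log_inv, Real.log_pow]
        rw [hLdef, Real.log_inv]
        push_cast
        ring
      have hstep : Real.log (2 * Real.pi * M * θ) ≤ A0 + 2 * L := by
        rcases le_or_gt (2 * Real.pi * M * θ) 1 with hsm | hbig
        · have : Real.log (2 * Real.pi * M * θ) ≤ 0 := Real.log_nonpos (by positivity) hsm
          linarith
        · have hmono : Real.log (2 * Real.pi * M * θ) ≤ Real.log (2 * Real.pi * M * (T / ε ^ 2)) := by
            apply Real.log_le_log (by linarith)
            exact mul_le_mul_of_nonneg_left hθ.2 (by positivity)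
          rw [hlogX] at hmono
          have : Real.log (2 * Real.pi * M * T) ≤ A0 := le_max_right _ _
          linarith
      exact max_le (by positivity) hstep
    have hBle : B ≤ (2 * Real.pi)⁻¹ * (1 + A0 + 2 * L) := by
      rw [hBdef]
      apply mul_le_mul_of_nonneg_left _ (by positivity)
      linarith
    have hNL : κ * (1 + A0) ≤ (Real.pi - κ) * L := by
      have := hLN.le
      rw [hNdef] at this
      rw [div_le_iff₀ hπκ] at this
      linarith [this]
    calc κ / L * B ≤ κ / L * ((2 * Real.pi)⁻¹ * (1 + A0 + 2 * L)) := by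
          apply mul_le_mul_of_nonneg_left hBle (by positivity)
      _ = κ * (1 + A0 + 2 * L) / (L * (2 * Real.pi)) := by
          field_simp
      _ ≤ q := by
          rw [div_le_iff₀ (by positivity)]
          have hq2 : q * (2 * Real.pi) = κ + Real.pi := by
            calc q * (2 * Real.pi) = (κ / Real.pi) * Real.pi + Real.pi := by rw [hqdef]; ring
              _ = κ + Real.pi := by rw [div_mul_cancel₀ κ hπ.ne']
          have : q * (L * (2 * Real.pi)) = (κ + Real.pi) * L := by
            rw [mul_comm L (2*Real.pi), ← mul_assoc, hq2]
          rw [this]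
          nlinarith [hNL, hL0]
  -- main induction
  have key : ∀ n : ℕ, ∀ t : ℝ, 0 ≤ t → t ≤ θ → 0 ≤ h n t ∧ h n t ≤ B ^ n := by
    intro n
    induction n with
    | zero => intro t _ _; rw [h0 t]; norm_num
    | succ n ih =>
      intro t ht htθ
      rw [hrec n t]
      by_cases hInt : IntervalIntegrable
          (fun s => h n s * ∫ z, G (t - s) z * (∫ y, φ (z + y) * φ y)) volume 0 t
      · constructor
        · apply intervalIntegral.integral_nonneg ht
          intro s hs
          exact mul_nonneg (ih s hs.1 (hs.2.trans htθ)).1 (hI_nonneg _ (by linarith [hs.2]))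
        · have hg : IntervalIntegrable (fun s => B ^ n * min M (2 * Real.pi * (t - s))⁻¹) volume 0 t := by
            have h1 := (itil_II hM0 le_rfl ht).comp_sub_left t
            simp only [sub_zero, sub_self] at h1
            exact (h1.symm.const_mul (B ^ n))
          have hmono : (∫ s in (0:ℝ)..t, h n s * ∫ z, G (t - s) z * (∫ y, φ (z + y) * φ y))
              ≤ ∫ s in (0:ℝ)..t, B ^ n * min M (2 * Real.pi * (t - s))⁻¹ := by
            apply intervalIntegral.integral_mono_on ht hInt hg
            intro s hs
            have hts : (0:ℝ) ≤ t - s := by linarith [hs.2]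
            exact mul_le_mul (ih s hs.1 (hs.2.trans htθ)).2 (hI_min _ hts)
              (hI_nonneg _ hts) (by positivity)
          have hval : (∫ s in (0:ℝ)..t, B ^ n * min M (2 * Real.pi * (t - s))⁻¹)
              ≤ B ^ n * B := by
            rw [intervalIntegral.integral_const_mul]
            apply mul_le_mul_of_nonneg_left _ (by positivity)
            rw [hBdef]
            exact itil_integral_le hM0 ht htθ
          calc _ ≤ B ^ n * B := le_trans hmono hval
            _ = B ^ (n+1) := by rw [pow_succ]
      · rw [intervalIntegral.integral_undef hInt]
        exact ⟨le_rfl, by positivity⟩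
  -- conclusion
  have hterm : ∀ n : ℕ, 0 ≤ (κ / L) ^ n * h n θ ∧ (κ / L) ^ n * h n θ ≤ q ^ n := by
    intro n
    obtain ⟨h1', h2'⟩ := key n θ hθ0 le_rfl
    refine ⟨mul_nonneg (by positivity) h1', ?_⟩
    calc (κ / L) ^ n * h n θ ≤ (κ / L) ^ n * B ^ n := by
          apply mul_le_mul_of_nonneg_left h2' (by positivity)
      _ = (κ / L * B) ^ n := by rw [← mul_pow]
      _ ≤ q ^ n := pow_le_pow_left₀ (by positivity) hqB n
  have hsum : Summable (fun n : ℕ => (κ / L) ^ n * h n θ) :=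
    Summable.of_nonneg_of_le (fun n => (hterm n).1) (fun n => (hterm n).2)
      (summable_geometric_of_lt_one hq0.le hq1)
  refine ⟨hsum, ?_⟩
  calc (∑' n : ℕ, (κ / L) ^ n * h n θ) ≤ ∑' n : ℕ, q ^ n :=
        Summable.tsum_le_tsum (fun n => (hterm n).2) hsum (summable_geometric_of_lt_one hq0.le hq1)
    _ = (1 - q)⁻¹ := tsum_geometric_of_lt_one hq0.le hq1
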